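/- Let Ω ⊂ ℝ^d be a nonempty bounded open set, Y a normed vector space, g ∈ Y, and D : Y × Y → [0, ∞) a functional such that the map L²(Ω) → [0, ∞), f ↦ D(A(f), g), is sequentially lower semicontinuous with respect to L²(Ω)-convergence, where A : L²(Ω) → Y is a given (possibly nonlinear) map. Let φ : [0, ∞) → [0, ∞) be continuous, monotonically increasing, and satisfy φ(t) → ∞ as t → ∞. Fix α > 0 and an integer n ≥ 1. Then there exists θ* ∈ Θ_n minimizing the Tikhonov functional T(θ) := D(A(f_θ), g) + α·φ(c(θ)) over Θ_n, i.e. T(θ*) ≤ T(θ) for all θ ∈ Θ_n. -/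

import Mathlib

open MeasureTheory Filter Topology Bornology

noncomputable section

/-- Parameter of a single neuron: `(a, b, c)`. -/
abbrev NNParam (d : ℕ) : Type := ℝ × (Fin d → ℝ) × ℝ

/-- ℓ¹ norm on `ℝ^d`. -/
def l1 {d : ℕ} (b : Fin d → ℝ) : ℝ := ∑ i, |b i|

/-- The two-layer ReLU network with parameters `θ`. -/
def netFun {d n : ℕ} (θ : Fin n → NNParam d) : (Fin d → ℝ) → ℝ :=
  fun x => (1 / (n : ℝ)) * ∑ j, (θ j).1 * max (∑ i, (θ j).2.1 i * x i + (θ j).2.2) 0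

theorem netFun_continuous {d n : ℕ} (θ : Fin n → NNParam d) : Continuous (netFun θ) := by
  unfold netFun
  refine continuous_const.mul (continuous_finset_sum _ fun j _ => continuous_const.mul ?_)
  exact ((continuous_finset_sum _ fun i _ =>
    (continuous_const.mul (continuous_apply i))).add continuous_const).max continuous_const

/-- Membership of a single-neuron parameter in the set `M_r`. -/
def memMr {d : ℕ} (r : ℝ) (p : NNParam d) : Prop :=
  |p.1| ≤ r ∧ l1 p.2.1 + |p.2.2| = 1

theorem memLp_net {d n : ℕ} {Ω : Set (Fin d → ℝ)} (hΩo : IsOpen Ω) (hΩb : IsBounded Ω)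
    (θ : Fin n → NNParam d) : MemLp (netFun θ) 2 (volume.restrict Ω) := by
  have hc := netFun_continuous θ
  obtain ⟨C, hC⟩ := hΩb.isCompact_closure.exists_bound_of_continuousOn hc.continuousOn
  haveI : Fact (volume Ω < ⊤) := ⟨hΩb.measure_lt_top⟩
  refine MemLp.of_bound (hc.aestronglyMeasurable.restrict) C ?_
  filter_upwards [ae_restrict_mem hΩo.measurableSet] with x hx
  exact hC x (subset_closure hx)

/-- The two-layer ReLU network with parameters `θ`, as an element of `L²(Ω)`. -/
def netLp {d n : ℕ} (Ω : Set (Fin d → ℝ)) (hΩo : IsOpen Ω) (hΩb : IsBounded Ω)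
    (θ : Fin n → NNParam d) : Lp ℝ 2 (volume.restrict Ω) :=
  (memLp_net hΩo hΩb θ).toLp (netFun θ)

/-- The class `X_{n,r}` of width-`n` networks with parameters in `M_r`, inside `L²(Ω)`. -/
def Xlp {d : ℕ} (Ω : Set (Fin d → ℝ)) (hΩo : IsOpen Ω) (hΩb : IsBounded Ω)
    (n : ℕ) (r : ℝ) : Set (Lp ℝ 2 (volume.restrict Ω)) :=
  {f | ∃ θ : Fin n → NNParam d, (∀ j, memMr r (θ j)) ∧ f = netLp Ω hΩo hΩb θ}
/-- The parameter domain `Θ_n`: all inner-layer parameters lie on the ℓ¹ unit sphere. -/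
def ΘCond {d n : ℕ} (θ : Fin n → NNParam d) : Prop :=
  ∀ j, l1 (θ j).2.1 + |(θ j).2.2| = 1

/-- The path-norm functional `c(θ) = (1/n) ∑_j |a_j| (‖b_j‖₁ + |c_j|)`. -/
def pathNorm {d n : ℕ} (θ : Fin n → NNParam d) : ℝ :=
  (1 / (n : ℝ)) * ∑ j, |(θ j).1| * (l1 (θ j).2.1 + |(θ j).2.2|)

/-!
The Tikhonov functional `T` is lower semicontinuous on parameter space: `θ ↦ f_θ ∈ L²(Ω)` is
continuous because the network depends jointly continuously on `(θ, x)` and `Ω` has compact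
closure, and in the metrizable space `L²(Ω)` the sequential lower semicontinuity of the data
term is lower semicontinuity. On `Θ_n` the path norm is `(1/n) ∑ |a_j|`, so, as `φ → ∞`, a
sublevel set of `T` inside `Θ_n` bounds every outer weight `a_j`, while the inner weights lie
on the `ℓ¹` unit sphere. Sublevel sets are therefore compact and `T` attains its minimum.
-/

section Semicontinuity

variable {X β : Type*} [TopologicalSpace X]

theorem lowerSemicontinuous_of_tendsto_le_liminf [FirstCountableTopology X]
    [ConditionallyCompleteLinearOrder β] {f : X → β} (hbdd : BddBelow (Set.range f))
    (h : ∀ (u : ℕ → X) (x : X), Tendsto u atTop (𝓝 x) →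
      f x ≤ liminf (fun k => f (u k)) atTop) :
    LowerSemicontinuous f := by
  intro x y hy
  by_contra hev
  obtain ⟨u, hu, hfu⟩ := exists_seq_forall_of_frequently (not_eventually.1 hev)
  have hle : liminf (fun k => f (u k)) atTop ≤ y :=
    liminf_le_of_frequently_le (Frequently.of_forall fun k => not_lt.1 (hfu k))
      (hbdd.mono (Set.range_comp_subset_range u f)).isBoundedUnder_of_range
  exact (h u x hu).not_gt (hle.trans_lt hy)

theorem LowerSemicontinuous.exists_isMinOn_of_sublevel_subset [LinearOrder β] {f : X → β}
    {s C : Set X} {x₀ : X} (hf : LowerSemicontinuous f) (hs : IsClosed s) (hx₀ : x₀ ∈ s)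
    (hC : IsCompact C) (hsub : ∀ x ∈ s, f x ≤ f x₀ → x ∈ C) :
    ∃ x ∈ s, IsMinOn f s x := by
  have hx₀K : x₀ ∈ s ∩ f ⁻¹' Set.Iic (f x₀) := ⟨hx₀, le_rfl⟩
  have hK : IsCompact (s ∩ f ⁻¹' Set.Iic (f x₀)) :=
    hC.of_isClosed_subset (hs.inter (hf.isClosed_preimage _)) fun x hx => hsub x hx.1 hx.2
  obtain ⟨x, hx, hmin⟩ := (hf.lowerSemicontinuousOn _).exists_isMinOn ⟨x₀, hx₀K⟩ hK
  refine ⟨x, hx.1, fun y hy => ?_⟩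
  rcases le_total (f y) (f x₀) with hy₀ | hy₀
  · exact hmin ⟨hy, hy₀⟩
  · exact (hmin hx₀K).trans hy₀

end Semicontinuity

theorem continuous_toLp_of_ae_mem_isCompact {P X E : Type*} [TopologicalSpace P]
    [TopologicalSpace X] [MeasurableSpace X] [NormedAddCommGroup E] {p : ENNReal} [Fact (1 ≤ p)]
    {μ : Measure X} [IsFiniteMeasure μ] {K : Set X} (hK : IsCompact K) (hμK : ∀ᵐ x ∂μ, x ∈ K)
    {F : P → X → E} (hF : Continuous fun q : P × X => F q.1 q.2) (hFp : ∀ θ, MemLp (F θ) p μ) :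
    Continuous fun θ => (hFp θ).toLp (F θ) := by
  have : CompactSpace K := isCompact_iff_compactSpace.mp hK
  let G : C(P, C(K, E)) :=
    ContinuousMap.curry ⟨fun q : P × K => F q.1 q.2,
      hF.comp (continuous_fst.prodMk (continuous_subtype_val.comp continuous_snd))⟩
  have hdist : ∀ θ θ', dist ((hFp θ').toLp (F θ')) ((hFp θ).toLp (F θ)) ≤
      measureUnivNNReal μ ^ p.toReal⁻¹ * ‖G θ' - G θ‖ := by
    intro θ θ'
    rw [dist_eq_norm, ← MemLp.toLp_sub]
    refine Lp.norm_le_of_ae_bound (norm_nonneg _) ?_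
    filter_upwards [MemLp.coeFn_toLp ((hFp θ').sub (hFp θ)), hμK] with x hx hxK
    rw [hx]
    exact (G θ' - G θ).norm_coe_le_norm ⟨x, hxK⟩
  refine continuous_iff_continuousAt.2 fun θ => tendsto_iff_dist_tendsto_zero.2 ?_
  refine squeeze_zero (fun _ => dist_nonneg) (fun θ' => hdist θ θ') ?_
  have hG : Tendsto (fun θ' => ‖G θ' - G θ‖) (𝓝 θ) (𝓝 0) :=
    tendsto_iff_norm_sub_tendsto_zero.1 (G.continuous.tendsto θ)
  simpa using hG.const_mul (measureUnivNNReal μ ^ p.toReal⁻¹ : ℝ)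

theorem continuous_netLp {d n : ℕ} {Ω : Set (Fin d → ℝ)} (hΩo : IsOpen Ω) (hΩb : IsBounded Ω) :
    Continuous (netLp Ω hΩo hΩb : (Fin n → NNParam d) → Lp ℝ 2 (volume.restrict Ω)) := by
  have : Fact (volume Ω < ⊤) := ⟨hΩb.measure_lt_top⟩
  refine continuous_toLp_of_ae_mem_isCompact hΩb.isCompact_closure
    ((ae_restrict_mem hΩo.measurableSet).mono fun _ hx => subset_closure hx) ?_ _
  unfold netFun
  fun_prop

theorem continuous_pathNorm {d n : ℕ} : Continuous (pathNorm : (Fin n → NNParam d) → ℝ) := by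
  unfold pathNorm l1
  fun_prop

section Parameters

variable {d n : ℕ}

theorem abs_le_l1 (b : Fin d → ℝ) (i : Fin d) : |b i| ≤ l1 b :=
  Finset.single_le_sum (f := fun i => |b i|) (fun _ _ => abs_nonneg _) (Finset.mem_univ i)

theorem l1_nonneg (b : Fin d → ℝ) : 0 ≤ l1 b :=
  Finset.sum_nonneg fun _ _ => abs_nonneg _

theorem isClosed_setOf_ΘCond : IsClosed {θ : Fin n → NNParam d | ΘCond θ} := by
  simp only [ΘCond, Set.ofPred_forall]
  refine isClosed_iInter fun j => isClosed_eq ?_ continuous_const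
  unfold l1
  fun_prop

theorem pathNorm_of_ΘCond {θ : Fin n → NNParam d} (hθ : ΘCond θ) :
    pathNorm θ = (1 / (n : ℝ)) * ∑ j, |(θ j).1| := by
  simp only [pathNorm, hθ _, mul_one]

theorem abs_fst_le_mul_pathNorm {θ : Fin n → NNParam d} (hθ : ΘCond θ) (j : Fin n) :
    |(θ j).1| ≤ n * pathNorm θ := by
  have hn : (n : ℝ) ≠ 0 := Nat.cast_ne_zero.2 (Fin.pos j).ne'
  rw [pathNorm_of_ΘCond hθ, ← mul_assoc, mul_one_div_cancel hn, one_mul]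
  exact Finset.single_le_sum (f := fun j => |(θ j).1|) (fun _ _ => abs_nonneg _)
    (Finset.mem_univ j)

theorem isCompact_setOf_ΘCond_pathNorm_le (M : ℝ) :
    IsCompact {θ : Fin n → NNParam d | ΘCond θ ∧ pathNorm θ ≤ M} := by
  let box : Set (Fin n → NNParam d) := Set.univ.pi fun _ =>
    Set.Icc (-(n * M)) (n * M) ×ˢ (Set.univ.pi fun _ => Set.Icc (-1) 1) ×ˢ Set.Icc (-1) 1
  have hbox : IsCompact box :=
    isCompact_univ_pi fun _ =>
      isCompact_Icc.prod ((isCompact_univ_pi fun _ => isCompact_Icc).prod isCompact_Icc)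
  refine hbox.of_isClosed_subset
    (isClosed_setOf_ΘCond.inter (isClosed_le continuous_pathNorm continuous_const)) ?_
  rintro θ ⟨hθ, hM⟩ j -
  have hc : |(θ j).2.2| ≤ 1 := by linarith [hθ j, l1_nonneg (θ j).2.1]
  have hb : ∀ i, |(θ j).2.1 i| ≤ 1 := fun i => by
    linarith [hθ j, abs_le_l1 (θ j).2.1 i, abs_nonneg (θ j).2.2]
  have ha : |(θ j).1| ≤ n * M :=
    (abs_fst_le_mul_pathNorm hθ j).trans (mul_le_mul_of_nonneg_left hM n.cast_nonneg)
  exact ⟨abs_le.1 ha, fun i _ => abs_le.1 (hb i), abs_le.1 hc⟩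

theorem ΘCond_const_zero_zero_one : ΘCond (fun _ => (0, 0, 1) : Fin n → NNParam d) := by
  intro j
  simp [l1]

end Parameters

theorem tikhonov_minimizer_exists_general
    {d : ℕ} (Ω : Set (Fin d → ℝ)) (hΩo : IsOpen Ω)
    (hΩb : IsBounded Ω)
    {Y : Type*}
    (A : Lp ℝ 2 (volume.restrict Ω) → Y) (g : Y)
    (D : Y → Y → ℝ) (hD0 : ∀ y y', 0 ≤ D y y')
    (hlsc : ∀ (F : ℕ → Lp ℝ 2 (volume.restrict Ω)) (f : Lp ℝ 2 (volume.restrict Ω)),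
      Tendsto F atTop (nhds f) →
        D (A f) g ≤ liminf (fun k => D (A (F k)) g) atTop)
    (φ : ℝ → ℝ) (hφc : Continuous φ)
    (hφtop : Tendsto φ atTop atTop)
    (α : ℝ) (hα : 0 < α) (n : ℕ) :
    ∃ θs : Fin n → NNParam d, ΘCond θs ∧
      ∀ θ : Fin n → NNParam d, ΘCond θ →
        D (A (netLp Ω hΩo hΩb θs)) g + α * φ (pathNorm θs) ≤
          D (A (netLp Ω hΩo hΩb θ)) g + α * φ (pathNorm θ) := by
  let T : (Fin n → NNParam d) → ℝ :=
    fun θ => D (A (netLp Ω hΩo hΩb θ)) g + α * φ (pathNorm θ)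
  let θ₀ : Fin n → NNParam d := fun _ => (0, 0, 1)
  have hDlsc : LowerSemicontinuous fun f => D (A f) g :=
    lowerSemicontinuous_of_tendsto_le_liminf ⟨0, Set.forall_mem_range.2 fun _ => hD0 _ _⟩ hlsc
  have hTlsc : LowerSemicontinuous T := (hDlsc.comp (continuous_netLp hΩo hΩb)).add
    (continuous_const.mul (hφc.comp continuous_pathNorm)).lowerSemicontinuous
  obtain ⟨M, hM⟩ := (hφtop.eventually_gt_atTop (T θ₀ / α)).exists_forall_of_atTop
  have hcoercive : ∀ θ, ΘCond θ → T θ ≤ T θ₀ → ΘCond θ ∧ pathNorm θ ≤ M := by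
    intro θ hθ hT
    refine ⟨hθ, le_of_not_gt fun hMθ => hT.not_gt ?_⟩
    have hφθ := (div_lt_iff₀' hα).1 (hM _ hMθ.le)
    linarith [hD0 (A (netLp Ω hΩo hΩb θ)) g]
  obtain ⟨θs, hθs, hmin⟩ := hTlsc.exists_isMinOn_of_sublevel_subset isClosed_setOf_ΘCond
    ΘCond_const_zero_zero_one (isCompact_setOf_ΘCond_pathNorm_le M) hcoercive
  exact ⟨θs, hθs, fun θ hθ => hmin hθ⟩

/-- Existence of Tikhonov minimizers over the network parameter class:
if `f ↦ D(A f, g)` is nonnegative and sequentially lower semicontinuous w.r.t.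
`L²(Ω)`-convergence, and `φ : [0,∞) → [0,∞)` is continuous, monotone and tends to `∞`,
then for every `α > 0` and `n ≥ 1` the Tikhonov functional
`T(θ) = D(A f_θ, g) + α φ(c(θ))` attains its minimum over `Θ_n`. -/
theorem tikhonov_minimizer_exists
    {d : ℕ} (hd : 1 ≤ d) (Ω : Set (Fin d → ℝ)) (hne : Ω.Nonempty) (hΩo : IsOpen Ω)
    (hΩb : IsBounded Ω)
    {Y : Type*} [NormedAddCommGroup Y] [NormedSpace ℝ Y]
    (A : Lp ℝ 2 (volume.restrict Ω) → Y) (g : Y)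
    (D : Y → Y → ℝ) (hD0 : ∀ y y', 0 ≤ D y y')
    (hlsc : ∀ (F : ℕ → Lp ℝ 2 (volume.restrict Ω)) (f : Lp ℝ 2 (volume.restrict Ω)),
      Tendsto F atTop (nhds f) →
        D (A f) g ≤ liminf (fun k => D (A (F k)) g) atTop)
    (φ : ℝ → ℝ) (hφc : Continuous φ) (hφm : Monotone φ) (hφ0 : ∀ t, 0 ≤ φ t)
    (hφtop : Tendsto φ atTop atTop)
    (α : ℝ) (hα : 0 < α) (n : ℕ) (hn : 1 ≤ n) :
    ∃ θs : Fin n → NNParam d, ΘCond θs ∧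
      ∀ θ : Fin n → NNParam d, ΘCond θ →
        D (A (netLp Ω hΩo hΩb θs)) g + α * φ (pathNorm θs) ≤
          D (A (netLp Ω hΩo hΩb θ)) g + α * φ (pathNorm θ) :=
  tikhonov_minimizer_exists_general Ω hΩo hΩb A g D hD0 hlsc φ hφc hφtop α hα n
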